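/- Let p be an odd prime and n, k positive integers such that n/gcd(n,k) is odd and p^n ≡ 3 (mod 4), and set d = (p^n−1)/2 + p^k + 1. Then the power function f(x)=x^d on F_{p^n} satisfies _1Δ_f ≤ 6: for every a ∈ F_{p^n} with a ≠ 0 and every b ∈ F_{p^n}, the equation (x+a)^d − x^d = b has at most 6 solutions x ∈ F_{p^n}. -/

import Mathlib

/-!
Put `q = p ^ k`, `e = q + 1` and `t = (p ^ n - 1) / 2`, so that `d = t + e`. Since `z ^ t = ±1`
for `z ≠ 0`, every `z` satisfies `z ^ d = ± z ^ e`, and each solution `x` of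
`(x + a) ^ d - x ^ d = b` solves one of `(x + a) ^ e - x ^ e = ±b` or `(x + a) ^ e + x ^ e = ±b`.

As `x ↦ x ^ q` is additive, `(x + a) ^ e - x ^ e = a x ^ q + a ^ q x + a ^ e` is affine in `x`,
and its linear part has trivial kernel: a nonzero root `w` would give `(w / a) ^ (q - 1) = -1`,
an even power equal to the non-square `-1` (here `p ^ n ≡ 3 mod 4`). So each minus-equation has
at most one solution. Completing the square, `(x + a) ^ e + x ^ e = 2 (x + a / 2) ^ e + a ^ e / 2`,
and the only `e`-th roots of unity in `F` are `±1` because `gcd (q + 1, p ^ n - 1) ∣ 2` for odd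
`n`; so each plus-equation has at most two solutions, and `1 + 1 + 2 + 2 = 6`.
-/

theorem Nat.odd_of_pow_mod_four_eq_three {m n : ℕ} (h : m ^ n % 4 = 3) : Odd n := by
  rcases Nat.even_or_odd n with ⟨j, rfl⟩ | hn
  · rw [← two_mul, pow_mul', Nat.pow_mod] at h
    have : m ^ j % 4 < 4 := Nat.mod_lt _ (by norm_num)
    interval_cases m ^ j % 4 <;> simp at h
  · exact hn

theorem Nat.gcd_pow_add_one_pow_sub_one_dvd_two (p k : ℕ) {n : ℕ} (hn : Odd n) :
    (p ^ k + 1).gcd (p ^ n - 1) ∣ 2 := by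
  have h2k : (p ^ k + 1).gcd (p ^ n - 1) ∣ p ^ k - 1 :=
    calc (p ^ k + 1).gcd (p ^ n - 1)
        ∣ (p ^ (2 * k) - 1).gcd (p ^ n - 1) := by
          refine Nat.gcd_dvd_gcd_of_dvd_left _ ⟨p ^ k - 1, ?_⟩
          rw [pow_mul', ← one_pow 2, Nat.sq_sub_sq, one_pow]
      _ = (p ^ k - 1).gcd (p ^ n - 1) := by
          rw [Nat.pow_sub_one_gcd_pow_sub_one, Nat.pow_sub_one_gcd_pow_sub_one,
            Nat.Coprime.gcd_mul_left_cancel _ (Nat.coprime_two_left.2 hn)]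
      _ ∣ p ^ k - 1 := Nat.gcd_dvd_left _ _
  have hsub : (p ^ k + 1).gcd (p ^ n - 1) ∣ (p ^ k + 1) - (p ^ k - 1) :=
    Nat.dvd_sub (Nat.gcd_dvd_left _ _) h2k
  rcases Nat.eq_zero_or_pos (p ^ k) with h | h
  · simp_all
  · rwa [show p ^ k + 1 - (p ^ k - 1) = 2 by omega] at hsub

theorem ncard_pow_eq_le_two {K : Type*} [Field K] {m : ℕ} (hm : m ≠ 0)
    (h : ∀ ζ : K, ζ ^ m = 1 → ζ = 1 ∨ ζ = -1) (c : K) : {x : K | x ^ m = c}.ncard ≤ 2 := by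
  rcases {x : K | x ^ m = c}.eq_empty_or_nonempty with h0 | ⟨x₀, hx₀⟩
  · simp [h0]
  have hsub : {x : K | x ^ m = c} ⊆ {x₀, -x₀} := by
    intro x hx
    simp only [Set.mem_ofPred_eq] at hx hx₀
    rcases eq_or_ne x₀ 0 with rfl | hx₀0
    · rw [zero_pow hm, ← hx, eq_comm, pow_eq_zero_iff hm] at hx₀
      simp [hx₀]
    · have : (x / x₀) ^ m = 1 := by
        rw [div_pow, hx, ← hx₀, div_self (pow_ne_zero _ hx₀0)]
      rcases h _ this with h1 | h1 <;> field_simp at h1 <;> simp [h1]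
  exact (Set.ncard_le_ncard hsub).trans ((Set.ncard_insert_le _ _).trans (by simp))

namespace FiniteField

variable {F : Type*} [Field F] [Fintype F]

theorem ringChar_ne_two_of_card_mod_four_eq_three (hF : Fintype.card F % 4 = 3) :
    ringChar F ≠ 2 := fun h => by
  have := even_card_of_char_two h
  omega

theorem pow_card_div_two_add_eq_or_eq_neg (hF : ringChar F ≠ 2) {m : ℕ} (hm : m ≠ 0) (z : F) :
    z ^ (Fintype.card F / 2 + m) = z ^ m ∨ z ^ (Fintype.card F / 2 + m) = -z ^ m := by
  rcases eq_or_ne z 0 with rfl | hz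
  · simp [hm]
  · rw [pow_add]
    rcases pow_dichotomy hF hz with h | h <;> simp [h]

theorem pow_sub_one_ne_neg_one (hF : Fintype.card F % 4 = 3) {m : ℕ} (hm : Odd m) (u : F) :
    u ^ (m - 1) ≠ -1 := by
  obtain ⟨c, rfl⟩ := hm
  rw [Nat.add_sub_cancel, pow_mul']
  intro h
  exact isSquare_neg_one_iff.1 ⟨u ^ c, by rw [← h, sq]⟩ hF

theorem eq_one_or_eq_neg_one_of_pow_pow_add_one_eq_one {p n : ℕ}
    (hcard : Fintype.card F = p ^ n) (hn : Odd n) (k : ℕ) {ζ : F} (hζ : ζ ^ (p ^ k + 1) = 1) :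
    ζ = 1 ∨ ζ = -1 := by
  have hζ0 : ζ ≠ 0 := by
    rintro rfl
    simp at hζ
  have hζq : ζ ^ (p ^ n - 1) = 1 := hcard ▸ pow_card_sub_one_eq_one ζ hζ0
  have h2 : orderOf ζ ∣ 2 :=
    (Nat.dvd_gcd (orderOf_dvd_of_pow_eq_one hζ) (orderOf_dvd_of_pow_eq_one hζq)).trans
      (Nat.gcd_pow_add_one_pow_sub_one_dvd_two p k hn)
  exact sq_eq_one_iff.1 (orderOf_dvd_iff_pow_eq_one.1 h2)

variable {p : ℕ} [Fact p.Prime] [CharP F p]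

theorem mul_pow_char_pow_add_pow_char_pow_mul_injective (hF : Fintype.card F % 4 = 3) (k : ℕ)
    {a : F} (ha : a ≠ 0) : Function.Injective fun x : F => a * x ^ p ^ k + a ^ p ^ k * x := by
  have hp : Odd p := (Fact.out : p.Prime).odd_of_ne_two <| by
    simpa [ringChar.eq F p] using ringChar_ne_two_of_card_mod_four_eq_three hF
  intro x y hxy
  by_contra hne
  set w := (x - y) / a
  have hw : w ≠ 0 := div_ne_zero (sub_ne_zero.2 hne) ha
  have hwq : w ^ p ^ k = -w := by
    rw [div_pow, sub_pow_char_pow, neg_div', div_eq_div_iff (pow_ne_zero _ ha) ha]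
    linear_combination hxy
  refine pow_sub_one_ne_neg_one hF (hp.pow (n := k)) w (mul_right_cancel₀ hw ?_)
  rw [← pow_succ, Nat.sub_add_cancel hp.pow.pos, hwq, neg_one_mul]

theorem ncard_pow_add_sub_pow_le_one (hF : Fintype.card F % 4 = 3) (k : ℕ) {a : F} (ha : a ≠ 0)
    (v : F) : {x : F | (x + a) ^ (p ^ k + 1) - x ^ (p ^ k + 1) = v}.ncard ≤ 1 := by
  have expand (z : F) : (z + a) ^ (p ^ k + 1) - z ^ (p ^ k + 1) =
      (a * z ^ p ^ k + a ^ p ^ k * z) + a ^ (p ^ k + 1) := by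
    rw [pow_succ, pow_succ, pow_succ, add_pow_char_pow]
    ring
  rw [Set.ncard_le_one_iff_subsingleton]
  intro x hx y hy
  refine mul_pow_char_pow_add_pow_char_pow_mul_injective hF k ha ?_
  simp only [Set.mem_ofPred_eq, expand] at hx hy
  linear_combination hx - hy

theorem ncard_pow_add_add_pow_le_two (hF : ringChar F ≠ 2) {n : ℕ}
    (hcard : Fintype.card F = p ^ n) (hn : Odd n) (k : ℕ) (a v : F) :
    {x : F | (x + a) ^ (p ^ k + 1) + x ^ (p ^ k + 1) = v}.ncard ≤ 2 := by
  have h2 : (2 : F) ≠ 0 := Ring.two_ne_zero hF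
  have h2q : (2 : F) ^ p ^ k = 2 := by
    simpa [one_add_one_eq_two] using add_pow_char_pow (1 : F) 1 p k
  have complete_square (x : F) : (x + a) ^ (p ^ k + 1) + x ^ (p ^ k + 1) =
      2 * (x + a / 2) ^ (p ^ k + 1) + a ^ (p ^ k + 1) / 2 := by
    rw [pow_succ, pow_succ, pow_succ, pow_succ, add_pow_char_pow, add_pow_char_pow, div_pow, h2q]
    field_simp
    ring
  have hset : {x : F | (x + a) ^ (p ^ k + 1) + x ^ (p ^ k + 1) = v} =
      (· + a / 2) ⁻¹' {y | y ^ (p ^ k + 1) = (v - a ^ (p ^ k + 1) / 2) / 2} := by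
    ext x
    simp only [Set.mem_ofPred_eq, Set.mem_preimage, complete_square]
    rw [eq_div_iff h2, eq_sub_iff_add_eq, mul_comm]
  rw [hset, Set.ncard_preimage_of_injective_subset_range (add_left_injective _)
    fun y _ => ⟨y - a / 2, sub_add_cancel y _⟩]
  exact ncard_pow_eq_le_two (Nat.add_one_ne_zero _)
    (fun _ => eq_one_or_eq_neg_one_of_pow_pow_add_one_eq_one hcard hn k) _

end FiniteField

open FiniteField in
theorem stmt_14_general (p n k : ℕ) (hp : p.Prime)
    (hmod : p ^ n % 4 = 3) (d : ℕ) (hd : d = (p ^ n - 1) / 2 + p ^ k + 1)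
    (F : Type*) [Field F] [Fintype F] (hcard : Fintype.card F = p ^ n)
    (a b : F) (ha : a ≠ 0) :
    {x : F | (x + a) ^ d - x ^ d = b}.ncard ≤ 6 := by
  have := Fact.mk hp
  have := charP_of_card_eq_prime_pow hcard
  have hF : Fintype.card F % 4 = 3 := hcard ▸ hmod
  have hF2 := ringChar_ne_two_of_card_mod_four_eq_three hF
  have hn : Odd n := Nat.odd_of_pow_mod_four_eq_three hmod
  have hd' : d = Fintype.card F / 2 + (p ^ k + 1) := by omega
  set A := fun v : F => {x : F | (x + a) ^ (p ^ k + 1) - x ^ (p ^ k + 1) = v}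
  set B := fun v : F => {x : F | (x + a) ^ (p ^ k + 1) + x ^ (p ^ k + 1) = v}
  have hsub : {x : F | (x + a) ^ d - x ^ d = b} ⊆ (A b ∪ A (-b)) ∪ (B b ∪ B (-b)) := by
    intro x hx
    simp only [Set.mem_ofPred_eq, hd'] at hx
    rcases pow_card_div_two_add_eq_or_eq_neg hF2 (Nat.add_one_ne_zero _) (x + a) with h₁ | h₁ <;>
    rcases pow_card_div_two_add_eq_or_eq_neg hF2 (Nat.add_one_ne_zero _) x with h₂ | h₂ <;>
    rw [h₁, h₂] at hx
    · exact Or.inl (Or.inl hx)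
    · exact Or.inr (Or.inl (show _ = b by linear_combination hx))
    · exact Or.inr (Or.inr (show _ = -b by linear_combination -hx))
    · exact Or.inl (Or.inr (show _ = -b by linear_combination -hx))
  calc {x : F | (x + a) ^ d - x ^ d = b}.ncard
      ≤ ((A b ∪ A (-b)) ∪ (B b ∪ B (-b))).ncard := Set.ncard_le_ncard hsub
    _ ≤ (A b).ncard + (A (-b)).ncard + ((B b).ncard + (B (-b)).ncard) :=
      (Set.ncard_union_le _ _).trans (add_le_add (Set.ncard_union_le _ _) (Set.ncard_union_le _ _))
    _ ≤ 1 + 1 + (2 + 2) :=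
      add_le_add
        (add_le_add (ncard_pow_add_sub_pow_le_one hF k ha _)
          (ncard_pow_add_sub_pow_le_one hF k ha _))
        (add_le_add (ncard_pow_add_add_pow_le_two hF2 hcard hn k a _)
          (ncard_pow_add_add_pow_le_two hF2 hcard hn k a _))

/-- Theorem 3.6 (Theorem `thme`), case `p^n ≡ 3 (mod 4)`, `c = 1`: for
`d = (p^n-1)/2 + p^k + 1` with `n/gcd(n,k)` odd, one has `₁Δ_f ≤ 6`. -/
theorem stmt_14 (p n k : ℕ) (hp : p.Prime) (hodd : Odd p)
    (hn0 : 0 < n) (hk0 : 0 < k) (hquot : Odd (n / Nat.gcd n k))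
    (hmod : p ^ n % 4 = 3) (d : ℕ) (hd : d = (p ^ n - 1) / 2 + p ^ k + 1)
    (F : Type*) [Field F] [Fintype F] (hcard : Fintype.card F = p ^ n)
    (a b : F) (ha : a ≠ 0) :
    {x : F | (x + a) ^ d - x ^ d = b}.ncard ≤ 6 :=
  stmt_14_general p n k hp hmod d hd F hcard a b ha
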